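/- arXiv:2103.02919 — 2 statements merged into one kernel-verified Lean document; each statement's English description precedes it below -/
import Mathlib

section
/- Let X, Y, P be lists over an alphabet with X = X' ++ [x] and Y = Y' ++ [y] for characters x ≠ y, and suppose P is a subsequence of both X and Y. Then clcsLen X Y P equals the maximum of clcsLen X' Y P (taken into account only when P is a subsequence of both X' and Y) and clcsLen X Y' P (taken into account only when P is a subsequence of both X and Y'); moreover at least one of these two cases applies. -/
/-!
A common subsequence of `X' ++ [x]` and `Y' ++ [y]` cannot end with both `x` and `y`, so it
already lies in `X'` or in `Y'`. Hence the CCSs of `(X, Y)` are exactly those of `(X', Y)` and of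
`(X, Y')`, giving `clcsLen X Y P = max (clcsLen X' Y P) (clcsLen X Y' P)`. As `clcsLen` is `0` when
no CCS exists, this identity also covers the cases where only one side admits a CCS.
-/

/-- `Z` is a constrained common subsequence of `X` and `Y` with respect to `P`:
`Z` is a sublist (subsequence) of both `X` and `Y`, and `P` is a sublist of `Z`. -/
def CCS {α : Type*} (X Y P Z : List α) : Prop :=
  Z.Sublist X ∧ Z.Sublist Y ∧ P.Sublist Z

/-- `Z` is a constrained longest common subsequence of `X` and `Y` with respect to `P`. -/
def CLCS {α : Type*} (X Y P Z : List α) : Prop :=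
  CCS X Y P Z ∧ ∀ W : List α, CCS X Y P W → W.length ≤ Z.length

/-- The maximum length of a constrained common subsequence of `X` and `Y`
with respect to `P` (meaningful when some CCS exists). -/
noncomputable def clcsLen {α : Type*} (X Y P : List α) : ℕ :=
  sSup {n | ∃ Z : List α, CCS X Y P Z ∧ Z.length = n}

namespace List

variable {α : Type*}

theorem Sublist.of_sublist_concat_of_getLast?_ne {Z X : List α} {x : α}
    (h : Z <+ X ++ [x]) (hZ : Z.getLast? ≠ some x) : Z <+ X := by
  obtain ⟨Z₁, Z₂, rfl, hZ₁, hZ₂⟩ := sublist_append_iff.1 h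
  rcases sublist_singleton.1 hZ₂ with rfl | rfl
  · simpa using hZ₁
  · exact absurd getLast?_concat hZ

theorem Sublist.sublist_or_sublist_of_concat_ne {Z X Y : List α} {x y : α} (hxy : x ≠ y)
    (hX : Z <+ X ++ [x]) (hY : Z <+ Y ++ [y]) : Z <+ X ∨ Z <+ Y := by
  by_cases hZ : Z.getLast? = some x
  · exact .inr (hY.of_sublist_concat_of_getLast?_ne (hZ ▸ by simpa using hxy))
  · exact .inl (hX.of_sublist_concat_of_getLast?_ne hZ)

end List

open List

section CCS

variable {α : Type*} {X Y P X' Y' Z : List α}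

theorem CCS.mono (hZ : CCS X' Y' P Z) (hX : X' <+ X) (hY : Y' <+ Y) : CCS X Y P Z :=
  ⟨hZ.1.trans hX, hZ.2.1.trans hY, hZ.2.2⟩

theorem CCS.constraint_sublist_left (hZ : CCS X Y P Z) : P <+ X := hZ.2.2.trans hZ.1

theorem CCS.constraint_sublist_right (hZ : CCS X Y P Z) : P <+ Y := hZ.2.2.trans hZ.2.1

theorem CCS.of_concat_ne {x y : α} (hxy : x ≠ y) (hZ : CCS (X' ++ [x]) (Y' ++ [y]) P Z) :
    CCS X' (Y' ++ [y]) P Z ∨ CCS (X' ++ [x]) Y' P Z :=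
  (hZ.1.sublist_or_sublist_of_concat_ne hxy hZ.2.1).imp
    (fun h ↦ ⟨h, hZ.2.1, hZ.2.2⟩) (fun h ↦ ⟨hZ.1, h, hZ.2.2⟩)

end CCS

section clcsLen

variable {α : Type*} {X Y P X' Y' : List α}

theorem bddAbove_ccs_lengths :
    BddAbove {n | ∃ Z : List α, CCS X Y P Z ∧ Z.length = n} :=
  ⟨X.length, by rintro _ ⟨Z, hZ, rfl⟩; exact hZ.1.length_le⟩

theorem CCS.length_le_clcsLen {Z : List α} (hZ : CCS X Y P Z) : Z.length ≤ clcsLen X Y P :=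
  le_csSup bddAbove_ccs_lengths ⟨Z, hZ, rfl⟩

theorem clcsLen_le_of_forall {n : ℕ} (h : ∀ Z, CCS X Y P Z → Z.length ≤ n) :
    clcsLen X Y P ≤ n :=
  csSup_le' (by rintro _ ⟨Z, hZ, rfl⟩; exact h Z hZ)

theorem clcsLen_mono (hX : X' <+ X) (hY : Y' <+ Y) : clcsLen X' Y' P ≤ clcsLen X Y P :=
  clcsLen_le_of_forall fun _ hZ ↦ (hZ.mono hX hY).length_le_clcsLen

theorem clcsLen_eq_zero_of_not_sublist (h : ¬(P <+ X ∧ P <+ Y)) : clcsLen X Y P = 0 :=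
  Nat.le_zero.1 <| clcsLen_le_of_forall fun _ hZ ↦ absurd ⟨hZ.constraint_sublist_left, hZ.constraint_sublist_right⟩ h

theorem clcsLen_concat_of_ne {x y : α} (hxy : x ≠ y) :
    clcsLen (X' ++ [x]) (Y' ++ [y]) P =
      max (clcsLen X' (Y' ++ [y]) P) (clcsLen (X' ++ [x]) Y' P) := by
  refine le_antisymm (clcsLen_le_of_forall fun Z hZ ↦ ?_) (max_le ?_ ?_)
  · rcases hZ.of_concat_ne hxy with h | h
    · exact le_max_of_le_left h.length_le_clcsLen
    · exact le_max_of_le_right h.length_le_clcsLen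
  · exact clcsLen_mono (List.sublist_append_left _ _) (List.Sublist.refl _)
  · exact clcsLen_mono (List.Sublist.refl _) (List.sublist_append_left _ _)

end clcsLen

theorem clcsLen_mismatch {α : Type*} (X Y P X' Y' : List α) (x y : α)
    (hxy : x ≠ y) (hX : X = X' ++ [x]) (hY : Y = Y' ++ [y])
    (h1 : P.Sublist X) (h2 : P.Sublist Y) :
    ((P.Sublist X' ∧ P.Sublist Y) ∨ (P.Sublist X ∧ P.Sublist Y')) ∧
    ((P.Sublist X' ∧ P.Sublist Y) → (P.Sublist X ∧ P.Sublist Y') →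
      clcsLen X Y P = max (clcsLen X' Y P) (clcsLen X Y' P)) ∧
    ((P.Sublist X' ∧ P.Sublist Y) → ¬(P.Sublist X ∧ P.Sublist Y') →
      clcsLen X Y P = clcsLen X' Y P) ∧
    (¬(P.Sublist X' ∧ P.Sublist Y) → (P.Sublist X ∧ P.Sublist Y') →
      clcsLen X Y P = clcsLen X Y' P) := by
  subst hX hY
  have hmax := clcsLen_concat_of_ne (X' := X') (Y' := Y') (P := P) hxy
  have hsplit := h1.sublist_or_sublist_of_concat_ne hxy h2
  refine ⟨hsplit.imp (⟨·, h2⟩) (⟨h1, ·⟩), fun _ _ ↦ hmax, fun _ h ↦ ?_, fun h _ ↦ ?_⟩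
  · rw [hmax, clcsLen_eq_zero_of_not_sublist h, max_eq_left (Nat.zero_le _)]
  · rw [hmax, clcsLen_eq_zero_of_not_sublist h, max_eq_right (Nat.zero_le _)]
end

section
/- Let (X', Y') be a constrained alignment of X and Y with respect to P that has minimal alignment score among all constrained alignments of X and Y with respect to P under the distance function δ (δ(a,b) = -1 if a = b and 0 otherwise). Then the list M of matching-column characters of (X', Y') is a constrained longest common subsequence of X and Y with respect to P. -/
/-- `(X', Y')` is an alignment of `X` and `Y`: equal lengths, removing the spaces
(`none` entries) gives back `X` resp. `Y`, and no column consists of two spaces. -/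
def IsAlignment {σ : Type*} (X Y : List σ) (X' Y' : List (Option σ)) : Prop :=
  X'.length = Y'.length ∧
  X'.filterMap id = X ∧
  Y'.filterMap id = Y ∧
  ∀ p ∈ X'.zip Y', ¬(p.1 = none ∧ p.2 = none)

/-- The list of matching-column characters of an alignment. -/
def matchCols {σ : Type*} [DecidableEq σ] (X' Y' : List (Option σ)) : List σ :=
  (X'.zip Y').filterMap (fun p => if p.1 = p.2 then p.1 else none)

/-- `(X', Y')` is a constrained alignment of `X` and `Y` with respect to `P`. -/
def IsConstrainedAlignment {σ : Type*} [DecidableEq σ] (X Y P : List σ)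
    (X' Y' : List (Option σ)) : Prop :=
  IsAlignment X Y X' Y' ∧ P.Sublist (matchCols X' Y')

/-- The alignment score of `(X', Y')` under a distance function `δ`. -/
def score {σ : Type*} (δ : Option σ → Option σ → ℤ) (X' Y' : List (Option σ)) : ℤ :=
  ((X'.zip Y').map (fun p => δ p.1 p.2)).sum

/-- The distance function: `-1` on a match, `0` otherwise. -/
def delta {σ : Type*} [DecidableEq σ] (a b : Option σ) : ℤ :=
  if a = b then -1 else 0

/-!
Under `delta` an alignment scores minus the number of its matching columns, so a constrained
alignment of minimal score is one with the most matching columns. The matching columns of an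
alignment form a common subsequence, and conversely every common subsequence `W` arises this way:
align the occurrences of its characters in `X` and `Y` with each other and everything in between
against gaps. When `P <+ W` that alignment is constrained, so no CCS is longer than `matchCols X' Y'`.
-/

open List

theorem List.exists_eq_append_cons_of_cons_sublist {α : Type*} {a : α} {l l' : List α}
    (h : a :: l <+ l') : ∃ s t, l' = s ++ a :: t ∧ l <+ t := by
  obtain ⟨r₁, r₂, rfl, ha, hl⟩ := cons_sublist_iff.1 h
  obtain ⟨s, u, rfl⟩ := append_of_mem ha
  exact ⟨s, u ++ r₂, by simp, hl.trans (sublist_append_right u r₂)⟩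

section

variable {σ : Type*}

theorem IsAlignment.append {X₁ Y₁ X₂ Y₂ : List σ} {A B C D : List (Option σ)}
    (h₁ : IsAlignment X₁ Y₁ A B) (h₂ : IsAlignment X₂ Y₂ C D) :
    IsAlignment (X₁ ++ X₂) (Y₁ ++ Y₂) (A ++ C) (B ++ D) := by
  obtain ⟨hl₁, rfl, rfl, hn₁⟩ := h₁
  obtain ⟨hl₂, rfl, rfl, hn₂⟩ := h₂
  refine ⟨by simp [hl₁, hl₂], by simp, by simp, ?_⟩
  rw [zip_append hl₁]
  exact forall_mem_append.2 ⟨hn₁, hn₂⟩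

variable [DecidableEq σ]

theorem matchCols_comm (X' Y' : List (Option σ)) : matchCols Y' X' = matchCols X' Y' := by
  rw [matchCols, ← zip_swap, filterMap_map, matchCols]
  refine filterMap_congr fun p _ => ?_
  obtain ⟨a, b⟩ := p
  by_cases hab : a = b <;> simp [hab, eq_comm]

theorem matchCols_sublist_filterMap_left {X' Y' : List (Option σ)}
    (hlen : X'.length = Y'.length) : matchCols X' Y' <+ X'.filterMap id := by
  have hfst : matchCols X' Y' = ((X'.zip Y').filter fun p => p.1 = p.2).filterMap Prod.fst := by
    simp [matchCols, filterMap_filter]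
  calc matchCols X' Y' <+ (X'.zip Y').filterMap Prod.fst := hfst ▸ (filter_sublist).filterMap _
    _ = ((X'.zip Y').map Prod.fst).filterMap id := by rw [filterMap_map]; rfl
    _ = X'.filterMap id := by rw [map_fst_zip hlen.le]

theorem matchCols_append {A B C D : List (Option σ)} (h : A.length = B.length) :
    matchCols (A ++ C) (B ++ D) = matchCols A B ++ matchCols C D := by
  simp [matchCols, zip_append h]

theorem IsConstrainedAlignment.ccs_matchCols {X Y P : List σ} {X' Y' : List (Option σ)}
    (h : IsConstrainedAlignment X Y P X' Y') : CCS X Y P (matchCols X' Y') := by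
  obtain ⟨⟨hlen, rfl, rfl, -⟩, hP⟩ := h
  exact ⟨matchCols_sublist_filterMap_left hlen,
    matchCols_comm X' Y' ▸ matchCols_sublist_filterMap_left hlen.symm, hP⟩

theorem IsAlignment.score_delta {X Y : List σ} {X' Y' : List (Option σ)}
    (h : IsAlignment X Y X' Y') : score delta X' Y' = -(matchCols X' Y').length := by
  -- a `(none, none)` column would score `-1` without contributing a character
  have hgap := h.2.2.2
  unfold score matchCols
  generalize X'.zip Y' = L at hgap
  induction L with
  | nil => simp
  | cons p L ih =>
    obtain ⟨a, b⟩ := p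
    obtain ⟨hab, hL⟩ := forall_mem_cons.1 hgap
    rw [map_cons, sum_cons, filterMap_cons, ih hL]
    by_cases heq : a = b
    · subst heq
      obtain ⟨c, rfl⟩ := Option.ne_none_iff_exists'.1 fun h => hab ⟨h, h⟩
      simp [delta]
    · simp [delta, heq]

def IsMatchColsOfAlignment (X Y W : List σ) : Prop :=
  ∃ X' Y', IsAlignment X Y X' Y' ∧ matchCols X' Y' = W

namespace IsMatchColsOfAlignment

theorem append {X₁ Y₁ W₁ X₂ Y₂ W₂ : List σ} (h₁ : IsMatchColsOfAlignment X₁ Y₁ W₁)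
    (h₂ : IsMatchColsOfAlignment X₂ Y₂ W₂) :
    IsMatchColsOfAlignment (X₁ ++ X₂) (Y₁ ++ Y₂) (W₁ ++ W₂) := by
  obtain ⟨A, B, hAB, rfl⟩ := h₁
  obtain ⟨C, D, hCD, rfl⟩ := h₂
  exact ⟨A ++ C, B ++ D, hAB.append hCD, matchCols_append hAB.1⟩

theorem singleton (w : σ) : IsMatchColsOfAlignment [w] [w] [w] :=
  ⟨[some w], [some w], ⟨rfl, rfl, rfl, by simp⟩, by simp [matchCols]⟩

theorem gaps_left (X : List σ) : IsMatchColsOfAlignment X [] [] :=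
  ⟨X.map some, X.map fun _ => none, ⟨by simp, by simp, by simp, by rw [zip_map']; simp⟩,
    by rw [matchCols, zip_map']; simp⟩

theorem gaps_right (Y : List σ) : IsMatchColsOfAlignment [] Y [] :=
  ⟨Y.map fun _ => none, Y.map some, ⟨by simp, by simp, by simp, by rw [zip_map']; simp⟩,
    by rw [matchCols, zip_map']; simp⟩

theorem nil (X Y : List σ) : IsMatchColsOfAlignment X Y [] := by
  simpa using (gaps_left X).append (gaps_right Y)

theorem of_sublist {X Y W : List σ} (hX : W <+ X) (hY : W <+ Y) :
    IsMatchColsOfAlignment X Y W := by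
  induction W generalizing X Y with
  | nil => exact nil X Y
  | cons w W ih =>
    obtain ⟨X₁, X₂, rfl, hX₂⟩ := exists_eq_append_cons_of_cons_sublist hX
    obtain ⟨Y₁, Y₂, rfl, hY₂⟩ := exists_eq_append_cons_of_cons_sublist hY
    simpa using (nil X₁ Y₁).append ((singleton w).append (ih hX₂ hY₂))

end IsMatchColsOfAlignment

end

theorem min_alignment_matchCols_is_clcs {σ : Type*} [DecidableEq σ]
    (X Y P : List σ) (X' Y' : List (Option σ))
    (h : IsConstrainedAlignment X Y P X' Y')
    (hmin : ∀ X'' Y'' : List (Option σ), IsConstrainedAlignment X Y P X'' Y'' →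
      score delta X' Y' ≤ score delta X'' Y'') :
    CLCS X Y P (matchCols X' Y') := by
  refine ⟨h.ccs_matchCols, fun W ⟨hWX, hWY, hPW⟩ => ?_⟩
  obtain ⟨A, B, hAB, rfl⟩ := IsMatchColsOfAlignment.of_sublist hWX hWY
  have hscore := hmin A B ⟨hAB, hPW⟩
  rw [h.1.score_delta, hAB.score_delta] at hscore
  omega
end
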